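/- arXiv:2306.01838 — 3 statements merged into one kernel-verified Lean document; each statement's English description precedes it below -/
import Mathlib

section
/- Let T be a metric tree (a geodesic metric space in which every pair of points is joined by a unique arc) and let η : [0,1] → T be a geodesic with η(0) ≠ η(1), and β : [0,1] → T a path with β(0) = η(0) and β(1) = η(1). Then for any finite increasing sequence 0 = t₀ < t₁ < ... < t_{n+1} = 1, there exist times 0 = t₀* < t₁* < ... < t_{n+1}* = 1 such that β(tᵢ*) = η(tᵢ) for all i. -/
open Set

/-- `A` is an arc in `T` from `x` to `y`: the image of an injective continuous map
on `[0,1]` with endpoints `x` and `y`. -/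
def IsArcIn {T : Type*} [TopologicalSpace T] (A : Set T) (x y : T) : Prop :=
  ∃ f : ℝ → T, ContinuousOn f (Icc 0 1) ∧ InjOn f (Icc 0 1) ∧
    f 0 = x ∧ f 1 = y ∧ f '' (Icc 0 1) = A

/-- `g : [0,1] → T` is a geodesic: `d(g s, g t) = d(g 0, g 1)·|s - t|`. -/
def IsGeodesicPath {T : Type*} [PseudoMetricSpace T] (g : ℝ → T) : Prop :=
  ∀ s ∈ Icc (0:ℝ) 1, ∀ t ∈ Icc (0:ℝ) 1,
    dist (g s) (g t) = dist (g 0) (g 1) * |s - t|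

/-- A metric tree: any two points are joined by a geodesic, and any two distinct points
are joined by a unique arc. -/
structure IsMetricTree (T : Type*) [MetricSpace T] : Prop where
  exists_geodesic : ∀ x y : T, ∃ g : ℝ → T, g 0 = x ∧ g 1 = y ∧ IsGeodesicPath g
  unique_arc : ∀ x y : T, x ≠ y → ∀ A B : Set T,
    IsArcIn A x y → IsArcIn B x y → A = B

/-!
A connected set containing `x` and `y` contains the geodesic segment `[x, y]`: if it missed a
point `p` of it, it would be split by the open sets of points `w` with `p ∉ [x, w]` and of points
`w ≠ p` with `p ∈ [x, w]`. Both are open by the tripod inclusion `[x, y] ⊆ [x, z] ∪ [z, y]`, which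
holds because following `[x, z]` up to the point where `[z, y]` leaves it for the last time, and
then the rest of `[z, y]`, is an arc, hence the unique one.

Let `tᵢ*` be the last time `β` visits `η tᵢ`. Then `β` restricted to `[tᵢ*, 1]` joins `η tᵢ` to
`η 1`, so it passes through `η tⱼ` for every `j > i`, whence `tⱼ* > tᵢ*`.
-/

theorem exists_isGreatest_Icc_inter_preimage {X : Type*} [TopologicalSpace X] {β : ℝ → X}
    {a b : ℝ} (hβ : ContinuousOn β (Icc a b)) {C : Set X} (hC : IsClosed C)
    (hne : (Icc a b ∩ β ⁻¹' C).Nonempty) : ∃ s, IsGreatest (Icc a b ∩ β ⁻¹' C) s :=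
  (isCompact_Icc.of_isClosed_subset (hβ.preimage_isClosed_of_isClosed isClosed_Icc hC)
    inter_subset_left).exists_isGreatest hne

theorem StrictMono.update_zero {β : Type*} [Preorder β] {n : ℕ} {f : Fin (n + 1) → β}
    (hf : StrictMono f) {c : β} (hc : c ≤ f 0) : StrictMono (Function.update f 0 c) := by
  intro i j hij
  rw [Function.update_of_ne ((Fin.zero_le i).trans_lt hij).ne']
  rcases eq_or_ne i 0 with rfl | hi
  · rw [Function.update_self]
    exact hc.trans_lt (hf hij)
  · rw [Function.update_of_ne hi]
    exact hf hij

section Concat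
variable {X : Type*} {f g : ℝ → X}

noncomputable def concatIcc (f g : ℝ → X) (u : ℝ) : X :=
  if u ≤ 1 / 2 then f (2 * u) else g (2 * u - 1)

theorem continuousOn_concatIcc [TopologicalSpace X] (hf : ContinuousOn f (Icc 0 1))
    (hg : ContinuousOn g (Icc 0 1)) (h : f 1 = g 0) : ContinuousOn (concatIcc f g) (Icc 0 1) := by
  have hle : {u : ℝ | u ≤ 1 / 2} = Iic (1 / 2) := rfl
  have hgt : {u : ℝ | ¬u ≤ 1 / 2} = Ioi (1 / 2) := by ext; simp
  refine ContinuousOn.if ?_ ?_ ?_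
  · rintro u ⟨-, hu⟩
    rw [hle, frontier_Iic, mem_singleton_iff] at hu
    norm_num [hu, h]
  · refine hf.comp (by fun_prop) fun u ⟨hu, hu'⟩ => ?_
    rw [hle, closure_Iic, mem_Iic] at hu'
    exact ⟨by linarith [hu.1], by linarith⟩
  · refine hg.comp (by fun_prop) fun u ⟨hu, hu'⟩ => ?_
    rw [hgt, closure_Ioi, mem_Ici] at hu'
    exact ⟨by linarith, by linarith [hu.2]⟩

theorem image_concatIcc (h : f 1 = g 0) :
    concatIcc f g '' Icc 0 1 = f '' Icc 0 1 ∪ g '' Icc 0 1 := by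
  ext p
  constructor
  · rintro ⟨u, hu, rfl⟩
    unfold concatIcc
    split_ifs with hu'
    · exact Or.inl (mem_image_of_mem f ⟨by linarith [hu.1], by linarith⟩)
    · exact Or.inr (mem_image_of_mem g ⟨by linarith, by linarith [hu.2]⟩)
  · rintro (⟨r, hr, rfl⟩ | ⟨r, hr, rfl⟩)
    · refine ⟨r / 2, ⟨by linarith [hr.1], by linarith [hr.2]⟩, ?_⟩
      rw [concatIcc, if_pos (by linarith [hr.2])]
      congr 1; ring
    · rcases hr.1.eq_or_lt with rfl | hr0
      · exact ⟨1 / 2, ⟨by norm_num, by norm_num⟩, by norm_num [concatIcc, h]⟩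
      · refine ⟨(r + 1) / 2, ⟨by linarith, by linarith [hr.2]⟩, ?_⟩
        rw [concatIcc, if_neg (by linarith)]
        congr 1; ring

theorem injOn_concatIcc (hf : InjOn f (Icc 0 1)) (hg : InjOn g (Icc 0 1))
    (hfg : f '' Icc 0 1 ∩ g '' Icc 0 1 ⊆ {g 0}) : InjOn (concatIcc f g) (Icc 0 1) := by
  have hcross : ∀ u ∈ Icc (0:ℝ) 1, ∀ v ∈ Icc (0:ℝ) 1, u ≤ 1 / 2 → 1 / 2 < v →
      f (2 * u) ≠ g (2 * v - 1) := by
    intro u hu v hv huh hvh h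
    have hv' : 2 * v - 1 ∈ Icc (0:ℝ) 1 := ⟨by linarith, by linarith [hv.2]⟩
    have hm : g (2 * v - 1) = g 0 :=
      hfg ⟨h ▸ mem_image_of_mem f ⟨by linarith [hu.1], by linarith⟩, mem_image_of_mem g hv'⟩
    linarith [hg hv' (left_mem_Icc.2 zero_le_one) hm]
  intro u hu v hv huv
  unfold concatIcc at huv
  split_ifs at huv with hu' hv' hv'
  · linarith [hf ⟨by linarith [hu.1], by linarith⟩ ⟨by linarith [hv.1], by linarith⟩ huv]
  · exact absurd huv (hcross u hu v hv hu' (not_le.1 hv'))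
  · exact absurd huv.symm (hcross v hv u hu hv' (not_le.1 hu'))
  · linarith [hg ⟨by linarith, by linarith [hu.2]⟩ ⟨by linarith, by linarith [hv.2]⟩ huv]

theorem IsArcIn.union [TopologicalSpace X] {A B : Set X} {x m y : X} (hA : IsArcIn A x m)
    (hB : IsArcIn B m y) (hAB : A ∩ B ⊆ {m}) : IsArcIn (A ∪ B) x y := by
  obtain ⟨f, hfc, hfi, rfl, hf1, rfl⟩ := hA
  obtain ⟨g, hgc, hgi, hg0, rfl, rfl⟩ := hB
  have hfg : f 1 = g 0 := hf1.trans hg0.symm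
  exact ⟨concatIcc f g, continuousOn_concatIcc hfc hgc hfg,
    injOn_concatIcc hfi hgi (hg0 ▸ hAB),
    by norm_num [concatIcc], by norm_num [concatIcc], image_concatIcc hfg⟩

end Concat

namespace IsGeodesicPath

section PseudoMetric
variable {T : Type*} [PseudoMetricSpace T] {g : ℝ → T}

theorem lipschitzOnWith (hg : IsGeodesicPath g) :
    LipschitzOnWith (nndist (g 0) (g 1)) g (Icc 0 1) :=
  LipschitzOnWith.of_dist_le_mul fun s hs t ht => by
    rw [hg s hs t ht, coe_nndist, Real.dist_eq]

theorem continuousOn (hg : IsGeodesicPath g) : ContinuousOn g (Icc 0 1) :=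
  hg.lipschitzOnWith.continuousOn

theorem comp_lineMap (hg : IsGeodesicPath g) {a b : ℝ} (ha : a ∈ Icc (0:ℝ) 1)
    (hb : b ∈ Icc (0:ℝ) 1) : IsGeodesicPath (g ∘ AffineMap.lineMap a b) := by
  intro s hs t ht
  have hmem : ∀ u ∈ Icc (0:ℝ) 1, AffineMap.lineMap a b u ∈ Icc (0:ℝ) 1 :=
    fun u hu => (convex_Icc 0 1).lineMap_mem ha hb hu
  simp only [Function.comp_apply, AffineMap.lineMap_apply_zero, AffineMap.lineMap_apply_one]
  rw [hg _ (hmem s hs) _ (hmem t ht), hg a ha b hb, AffineMap.lineMap_apply_ring',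
    AffineMap.lineMap_apply_ring', show s * (b - a) + a - (t * (b - a) + a) = (s - t) * (b - a)
      by ring, abs_mul, abs_sub_comm b a]
  ring

end PseudoMetric

variable {T : Type*} [MetricSpace T] {g : ℝ → T}

theorem injOn (hg : IsGeodesicPath g) (hne : g 0 ≠ g 1) : InjOn g (Icc 0 1) := by
  intro s hs t ht h
  have := hg s hs t ht
  rw [h, dist_self, eq_comm, mul_eq_zero, abs_eq_zero, sub_eq_zero] at this
  exact this.resolve_left (dist_ne_zero.2 hne)

theorem isArcIn (hg : IsGeodesicPath g) (hne : g 0 ≠ g 1) :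
    IsArcIn (g '' Icc 0 1) (g 0) (g 1) :=
  ⟨g, hg.continuousOn, hg.injOn hne, rfl, rfl, rfl⟩

end IsGeodesicPath

section Segment
variable {T : Type*} [MetricSpace T]

def geodesicSegment (x y : T) : Set T :=
  {p | ∃ g : ℝ → T, IsGeodesicPath g ∧ g 0 = x ∧ g 1 = y ∧ p ∈ g '' Icc 0 1}

theorem dist_add_dist_of_mem_geodesicSegment {x y p : T} (hp : p ∈ geodesicSegment x y) :
    dist x p + dist p y = dist x y := by
  obtain ⟨g, hg, rfl, rfl, u, hu, rfl⟩ := hp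
  rw [hg 0 (left_mem_Icc.2 zero_le_one) u hu, hg u hu 1 (right_mem_Icc.2 zero_le_one),
    abs_of_nonpos (by linarith [hu.1]), abs_of_nonpos (by linarith [hu.2])]
  ring

theorem geodesicSegment_self (x : T) : geodesicSegment x x ⊆ {x} := fun p hp => by
  have := dist_add_dist_of_mem_geodesicSegment hp
  rw [dist_self, dist_comm p x] at this
  exact (dist_le_zero.1 (by linarith [dist_nonneg (x := x) (y := p)])).symm

end Segment

namespace IsMetricTree
variable {T : Type*} [MetricSpace T] (hT : IsMetricTree T)
include hT

theorem image_eq_geodesicSegment {g : ℝ → T} (hg : IsGeodesicPath g) :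
    g '' Icc 0 1 = geodesicSegment (g 0) (g 1) := by
  refine Subset.antisymm (fun p hp => ⟨g, hg, rfl, rfl, hp⟩) ?_
  rintro p ⟨g', hg', h0, h1, hp⟩
  by_cases hne : g 0 = g 1
  · rw [geodesicSegment_self (g 0) ⟨g', hg', h0, h1.trans hne.symm, hp⟩]
    exact mem_image_of_mem g (left_mem_Icc.2 zero_le_one)
  · have harc := hg'.isArcIn (h0 ▸ h1 ▸ hne)
    rw [h0, h1] at harc
    exact hT.unique_arc _ _ hne _ _ harc (hg.isArcIn hne) ▸ hp

theorem geodesicSegment_apply_eq_image {g : ℝ → T} (hg : IsGeodesicPath g) {a b : ℝ}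
    (ha : a ∈ Icc (0:ℝ) 1) (hb : b ∈ Icc (0:ℝ) 1) :
    geodesicSegment (g a) (g b) = g '' uIcc a b := by
  have := hT.image_eq_geodesicSegment (hg.comp_lineMap ha hb)
  rwa [Function.comp_apply, Function.comp_apply, AffineMap.lineMap_apply_zero,
    AffineMap.lineMap_apply_one, image_comp, ← segment_eq_image_lineMap, segment_eq_uIcc,
    eq_comm] at this

theorem left_mem_geodesicSegment (x y : T) : x ∈ geodesicSegment x y := by
  obtain ⟨g, rfl, rfl, hg⟩ := hT.exists_geodesic x y
  exact ⟨g, hg, rfl, rfl, 0, left_mem_Icc.2 zero_le_one, rfl⟩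

theorem right_mem_geodesicSegment (x y : T) : y ∈ geodesicSegment x y := by
  obtain ⟨g, rfl, rfl, hg⟩ := hT.exists_geodesic x y
  exact ⟨g, hg, rfl, rfl, 1, right_mem_Icc.2 zero_le_one, rfl⟩

theorem isCompact_geodesicSegment (x y : T) : IsCompact (geodesicSegment x y) := by
  obtain ⟨g, rfl, rfl, hg⟩ := hT.exists_geodesic x y
  rw [← hT.image_eq_geodesicSegment hg]
  exact isCompact_Icc.image_of_continuousOn hg.continuousOn

theorem isArcIn_geodesicSegment {x y : T} (hxy : x ≠ y) :
    IsArcIn (geodesicSegment x y) x y := by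
  obtain ⟨g, rfl, rfl, hg⟩ := hT.exists_geodesic x y
  rw [← hT.image_eq_geodesicSegment hg]
  exact hg.isArcIn hxy

theorem geodesicSegment_eq_union {x m y : T}
    (h : geodesicSegment x m ∩ geodesicSegment m y ⊆ {m}) :
    geodesicSegment x y = geodesicSegment x m ∪ geodesicSegment m y := by
  rcases eq_or_ne x m with rfl | hxm
  · rw [union_eq_right.2 ((geodesicSegment_self x).trans
      (singleton_subset_iff.2 (hT.left_mem_geodesicSegment x y)))]
  rcases eq_or_ne m y with rfl | hmy
  · rw [union_eq_left.2 ((geodesicSegment_self m).trans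
      (singleton_subset_iff.2 (hT.right_mem_geodesicSegment x m)))]
  have hxy : x ≠ y := by
    rintro rfl
    exact hxm (h ⟨hT.left_mem_geodesicSegment x m, hT.right_mem_geodesicSegment m x⟩)
  exact hT.unique_arc x y hxy _ _ (hT.isArcIn_geodesicSegment hxy)
    ((hT.isArcIn_geodesicSegment hxm).union (hT.isArcIn_geodesicSegment hmy) h)

theorem geodesicSegment_subset_union (x z y : T) :
    geodesicSegment x y ⊆ geodesicSegment x z ∪ geodesicSegment z y := by
  obtain ⟨a, rfl, rfl, ha⟩ := hT.exists_geodesic x z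
  obtain ⟨b, hb0, rfl, hb⟩ := hT.exists_geodesic (a 1) y
  have h0 : (0:ℝ) ∈ Icc (0:ℝ) 1 := left_mem_Icc.2 zero_le_one
  have h1 : (1:ℝ) ∈ Icc (0:ℝ) 1 := right_mem_Icc.2 zero_le_one
  -- `b` leaves the segment from `a 0` to `a 1` for the last time at `b τ = a σ`
  obtain ⟨τ, ⟨hτ, σ, hσ, hστ⟩, hτmax⟩ := exists_isGreatest_Icc_inter_preimage hb.continuousOn
    (isCompact_Icc.image_of_continuousOn ha.continuousOn).isClosed ⟨0, h0, 1, h1, hb0.symm⟩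
  have hinter : geodesicSegment (a 0) (a σ) ∩ geodesicSegment (a σ) (b 1) ⊆ {a σ} := by
    rw [hT.geodesicSegment_apply_eq_image ha h0 hσ, hστ,
      hT.geodesicSegment_apply_eq_image hb hτ h1, uIcc_of_le hσ.1, uIcc_of_le hτ.2]
    rintro _ ⟨⟨r, hr, rfl⟩, s, hs, hrs⟩
    have hsτ : s = τ :=
      le_antisymm (hτmax ⟨Icc_subset_Icc_left hτ.1 hs, r, Icc_subset_Icc_right hσ.2 hr, hrs.symm⟩)
        hs.1
    rw [mem_singleton_iff, ← hrs, hsτ]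
  have hleft : geodesicSegment (a 0) (a σ) ⊆ geodesicSegment (a 0) (a 1) := by
    rw [hT.geodesicSegment_apply_eq_image ha h0 hσ, hT.geodesicSegment_apply_eq_image ha h0 h1]
    exact image_mono (uIcc_subset_uIcc_left (Icc_subset_uIcc hσ))
  have hright : geodesicSegment (a σ) (b 1) ⊆ geodesicSegment (a 1) (b 1) := by
    rw [hστ, ← hb0, hT.geodesicSegment_apply_eq_image hb hτ h1,
      hT.geodesicSegment_apply_eq_image hb h0 h1]
    exact image_mono (uIcc_subset_uIcc_right (Icc_subset_uIcc hτ))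
  rw [hT.geodesicSegment_eq_union hinter]
  exact union_subset_union hleft hright

theorem isOpen_setOf_notMem_geodesicSegment (x p : T) :
    IsOpen {w | p ∉ geodesicSegment x w} := by
  refine Metric.isOpen_iff.2 fun w hw => ?_
  obtain ⟨ε, hε, hball⟩ :=
    Metric.isOpen_iff.1 (hT.isCompact_geodesicSegment x w).isClosed.isOpen_compl p hw
  refine ⟨ε, hε, fun w' hw' hpw' => ?_⟩
  rcases hT.geodesicSegment_subset_union x w w' hpw' with h | h
  · exact hw h
  · refine hball ?_ (hT.right_mem_geodesicSegment x w)
    have := dist_add_dist_of_mem_geodesicSegment h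
    rw [Metric.mem_ball] at hw' ⊢
    linarith [dist_nonneg (x := p) (y := w'), dist_comm w' w, dist_comm p w]

theorem isOpen_setOf_ne_and_mem_geodesicSegment (x p : T) :
    IsOpen {w | w ≠ p ∧ p ∈ geodesicSegment x w} := by
  refine Metric.isOpen_iff.2 fun w ⟨hwp, hpw⟩ => ⟨dist w p, dist_pos.2 hwp, fun w' hw' => ?_⟩
  rw [Metric.mem_ball] at hw'
  refine ⟨by rintro rfl; linarith [dist_comm w w'], by_contra fun hpw' => ?_⟩
  rcases hT.geodesicSegment_subset_union x w' w hpw with h | h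
  · exact hpw' h
  · have := dist_add_dist_of_mem_geodesicSegment h
    linarith [dist_nonneg (x := w') (y := p), dist_comm p w]
theorem geodesicSegment_subset_of_isPreconnected {K : Set T} (hK : IsPreconnected K) {x y : T}
    (hx : x ∈ K) (hy : y ∈ K) : geodesicSegment x y ⊆ K := by
  intro p hp
  by_contra hpK
  obtain ⟨w, -, hwU, hwV⟩ := hK _ _ (hT.isOpen_setOf_notMem_geodesicSegment x p)
    (hT.isOpen_setOf_ne_and_mem_geodesicSegment x p)
    (fun w hw => (em (p ∈ geodesicSegment x w)).symm.imp id fun h => ⟨fun hwp => hpK (hwp ▸ hw), h⟩)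
    ⟨x, hx, fun h => hpK ((geodesicSegment_self x h : p = x) ▸ hx)⟩
    ⟨y, hy, fun hyp => hpK (hyp ▸ hy), hp⟩
  exact hwU hwV.2

theorem exists_mem_Icc_apply_eq {η β : ℝ → T} (hη : IsGeodesicPath η)
    (hβ : ContinuousOn β (Icc 0 1)) (h1 : β 1 = η 1) {s s' u : ℝ} (hs : s ∈ Icc (0:ℝ) 1)
    (hs' : s' ∈ Icc s 1) (hu : u ∈ Icc (0:ℝ) 1) (hβu : β u = η s) :
    ∃ v ∈ Icc u 1, β v = η s' := by
  have hK : IsPreconnected (β '' Icc u 1) :=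
    isPreconnected_Icc.image β (hβ.mono (Icc_subset_Icc_left hu.1))
  have hsub := hT.geodesicSegment_subset_of_isPreconnected hK
    ⟨u, left_mem_Icc.2 hu.2, hβu⟩ ⟨1, right_mem_Icc.2 hu.2, h1⟩
  rw [hT.geodesicSegment_apply_eq_image hη hs (right_mem_Icc.2 zero_le_one),
    uIcc_of_le hs.2] at hsub
  exact hsub (mem_image_of_mem η hs')

end IsMetricTree

/-- In a metric tree, given a geodesic `η` with distinct endpoints and a continuous path
`β` with the same endpoints, every partition `0 = t₀ < ... < t_{n+1} = 1` admits a
partition `0 = t₀* < ... < t_{n+1}* = 1` with `β(tᵢ*) = η(tᵢ)` for all `i`. -/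
theorem stmt5 {T : Type*} [MetricSpace T] (hT : IsMetricTree T)
    (η β : ℝ → T) (hη : IsGeodesicPath η) (hne : η 0 ≠ η 1)
    (hβ : ContinuousOn β (Icc 0 1)) (h0 : β 0 = η 0) (h1 : β 1 = η 1)
    (n : ℕ) (t : Fin (n + 2) → ℝ) (ht : StrictMono t)
    (ht0 : t 0 = 0) (ht1 : t (Fin.last (n + 1)) = 1) :
    ∃ ts : Fin (n + 2) → ℝ, StrictMono ts ∧ ts 0 = 0 ∧ ts (Fin.last (n + 1)) = 1 ∧
      ∀ i, β (ts i) = η (t i) := by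
  have hI0 : (0:ℝ) ∈ Icc (0:ℝ) 1 := left_mem_Icc.2 zero_le_one
  have htI : ∀ i, t i ∈ Icc (0:ℝ) 1 := fun i =>
    ⟨ht0 ▸ ht.monotone (Fin.zero_le i), ht1 ▸ ht.monotone (Fin.le_last i)⟩
  choose L hL using fun i => exists_isGreatest_Icc_inter_preimage hβ
    (isClosed_singleton (x := η (t i))) (hT.exists_mem_Icc_apply_eq hη hβ h1 hI0 (htI i) hI0 h0)
  have hβL : ∀ i, β (L i) = η (t i) := fun i => (hL i).1.2
  have hL_mono : StrictMono L := fun i j hij => by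
    obtain ⟨v, hv, hβv⟩ := hT.exists_mem_Icc_apply_eq hη hβ h1 (htI i) ⟨(ht hij).le, (htI j).2⟩
      (hL i).1.1 (hβL i)
    refine (hv.1.trans ((hL j).2 ⟨Icc_subset_Icc_left (hL i).1.1.1 hv, hβv⟩)).lt_of_ne fun h => ?_
    exact (ht hij).ne (hη.injOn hne (htI i) (htI j) (by rw [← hβL, ← hβL, h]))
  refine ⟨Function.update L 0 0, hL_mono.update_zero (hL 0).1.1.1, by simp, ?_, fun i => ?_⟩
  · rw [Function.update_of_ne (Fin.last_pos.ne')]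
    exact le_antisymm (hL _).1.1.2 ((hL _).2 ⟨right_mem_Icc.2 zero_le_one, h1.trans (ht1 ▸ rfl)⟩)
  · rcases eq_or_ne i 0 with rfl | hi
    · rw [Function.update_self, h0, ht0]
    · rw [Function.update_of_ne hi, hβL]
end

section
/- Let T be a metric tree with diam(T) ≤ L, let p : [0,1] → T be an L-Lipschitz path, and let η : [0,1] → T be the geodesic from p(0) to p(1). For each t ∈ [0,1] let g_t : [0,1] → T be the geodesic from p(t) to η(t). Then g(t,s) := g_t(s) is L-Lipschitz as a map from [0,1]×[0,1] with the L¹ metric to T. -/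
open Set

namespace Stmt10Aux

variable {T : Type*} [MetricSpace T]

lemma mem01 : (0:ℝ) ∈ Icc (0:ℝ) 1 := ⟨le_rfl, zero_le_one⟩
lemma mem11 : (1:ℝ) ∈ Icc (0:ℝ) 1 := ⟨zero_le_one, le_rfl⟩

lemma geod_dist_left {g : ℝ → T} (hg : IsGeodesicPath g) {α : ℝ} (hα : α ∈ Icc (0:ℝ) 1) :
    dist (g 0) (g α) = dist (g 0) (g 1) * α := by
  rw [hg 0 mem01 α hα]
  congr 1
  rw [zero_sub, abs_neg, abs_of_nonneg hα.1]

lemma geod_dist_right {g : ℝ → T} (hg : IsGeodesicPath g) {α : ℝ} (hα : α ∈ Icc (0:ℝ) 1) :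
    dist (g α) (g 1) = dist (g 0) (g 1) * (1 - α) := by
  rw [hg α hα 1 mem11]
  congr 1
  rw [abs_sub_comm, abs_of_nonneg (by linarith [hα.2])]

lemma geod_continuousOn {g : ℝ → T} (hg : IsGeodesicPath g) : ContinuousOn g (Icc 0 1) := by
  have : LipschitzOnWith (nndist (g 0) (g 1)) g (Icc 0 1) := by
    apply LipschitzOnWith.of_dist_le_mul
    intro x hx y hy
    rw [hg x hx y hy, Real.dist_eq, coe_nndist]
  exact this.continuousOn

lemma geod_injOn {g : ℝ → T} (hg : IsGeodesicPath g) (hne : g 0 ≠ g 1) :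
    InjOn g (Icc 0 1) := by
  intro x hx y hy hxy
  have h := hg x hx y hy
  rw [hxy, dist_self] at h
  have hD : 0 < dist (g 0) (g 1) := dist_pos.2 hne
  have habs : |x - y| = 0 := by
    rcases mul_eq_zero.1 h.symm with h' | h'
    · exact absurd h' (ne_of_gt hD)
    · exact h'
  have := abs_eq_zero.1 habs
  linarith [sub_eq_zero.1 this]

lemma geod_isArc {g : ℝ → T} (hg : IsGeodesicPath g) (hne : g 0 ≠ g 1) :
    IsArcIn (g '' Icc 0 1) (g 0) (g 1) :=
  ⟨g, geod_continuousOn hg, geod_injOn hg hne, rfl, rfl, rfl⟩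

lemma geod_const {g : ℝ → T} (hg : IsGeodesicPath g) (heq : g 0 = g 1) {α : ℝ}
    (hα : α ∈ Icc (0:ℝ) 1) : g α = g 0 := by
  have h2 := geod_dist_left hg hα
  have hD : dist (g 0) (g 1) = 0 := by rw [heq, dist_self]
  rw [hD, zero_mul] at h2
  exact (dist_eq_zero.1 h2).symm

lemma geod_reverse {g : ℝ → T} (hg : IsGeodesicPath g) :
    IsGeodesicPath (fun t => g (1 - t)) := by
  intro s hs t ht
  have h1s : (1:ℝ) - s ∈ Icc (0:ℝ) 1 := ⟨by linarith [hs.2], by linarith [hs.1]⟩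
  have h1t : (1:ℝ) - t ∈ Icc (0:ℝ) 1 := ⟨by linarith [ht.2], by linarith [ht.1]⟩
  show dist (g (1 - s)) (g (1 - t)) = dist (g (1 - 0)) (g (1 - 1)) * |s - t|
  rw [show (1:ℝ) - 0 = 1 by norm_num, show (1:ℝ) - 1 = 0 by norm_num]
  rw [hg (1 - s) h1s (1 - t) h1t, dist_comm (g 1) (g 0)]
  congr 1
  rw [show (1 - s) - (1 - t) = -(s - t) by ring, abs_neg]

lemma reverse_image (g : ℝ → T) : (fun t => g (1 - t)) '' Icc 0 1 = g '' Icc 0 1 := by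
  ext q
  constructor <;> rintro ⟨u, hu, rfl⟩
  · exact ⟨1 - u, ⟨by linarith [hu.2], by linarith [hu.1]⟩, rfl⟩
  · refine ⟨1 - u, ⟨by linarith [hu.2], by linarith [hu.1]⟩, ?_⟩
    show g (1 - (1 - u)) = g u
    norm_num

lemma dist_sum_of_mem {h : ℝ → T} (hh : IsGeodesicPath h) {q : T} (hq : q ∈ h '' Icc 0 1) :
    dist (h 0) q + dist q (h 1) = dist (h 0) (h 1) := by
  obtain ⟨α, hα, rfl⟩ := hq
  rw [geod_dist_left hh hα, geod_dist_right hh hα]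
  ring



set_option maxHeartbeats 1000000 in
lemma tripod (hT : IsMetricTree T) {g h1 h2 : ℝ → T}
    (hg : IsGeodesicPath g) (hh1 : IsGeodesicPath h1) (hh2 : IsGeodesicPath h2)
    (ex : g 0 = h1 0) (ez : h1 1 = h2 0) (ey : g 1 = h2 1) :
    g '' Icc 0 1 ⊆ h1 '' Icc 0 1 ∪ h2 '' Icc 0 1 := by
  by_cases hxy : g 0 = g 1
  · rintro q ⟨u, hu, rfl⟩
    left
    exact ⟨0, mem01, by rw [← ex, geod_const hg hxy hu]⟩
  by_cases hxz : h1 0 = h1 1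
  · -- z = x : the arc is h2
    have hB : IsArcIn (h2 '' Icc 0 1) (g 0) (g 1) := by
      have e0 : h2 0 = g 0 := by rw [← ez, ← hxz, ex]
      have := geod_isArc hh2 (by rw [e0, ← ey]; exact hxy)
      rwa [e0, ← ey] at this
    have := hT.unique_arc (g 0) (g 1) hxy _ _ (geod_isArc hg hxy) hB
    rw [this]
    exact subset_union_right
  by_cases hzy : h2 0 = h2 1
  · have hB : IsArcIn (h1 '' Icc 0 1) (g 0) (g 1) := by
      have e1 : h1 1 = g 1 := by rw [ez, hzy, ey]
      have := geod_isArc hh1 (by rw [← ex, e1]; exact hxy)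
      rwa [← ex, e1] at this
    have := hT.unique_arc (g 0) (g 1) hxy _ _ (geod_isArc hg hxy) hB
    rw [this]
    exact subset_union_left
  · -- main case: x, z, y "distinct"
    have hC : IsCompact (h2 '' Icc 0 1) :=
      isCompact_Icc.image_of_continuousOn (geod_continuousOn hh2)
    set S : Set ℝ := Icc (0:ℝ) 1 ∩ h1 ⁻¹' (h2 '' Icc 0 1) with hSdef
    have hSne : (1:ℝ) ∈ S := ⟨mem11, ⟨0, mem01, ez.symm⟩⟩
    have hSbdd : BddBelow S := ⟨0, fun u hu => hu.1.1⟩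
    have hSclosed : IsClosed S :=
      (geod_continuousOn hh1).preimage_isClosed_of_isClosed isClosed_Icc hC.isClosed
    set u₀ := sInf S with hu₀def
    have hu₀S : u₀ ∈ S := hSclosed.csInf_mem ⟨1, hSne⟩ hSbdd
    obtain ⟨hu₀I, v₀, hv₀I, hv₀⟩ := hu₀S   -- hv₀ : h2 v₀ = h1 u₀
    have hmin : ∀ u ∈ S, u₀ ≤ u := fun u hu => csInf_le hSbdd hu
    -- cross-injectivity
    have hcross : ∀ u ∈ Icc (0:ℝ) 1, ∀ v ∈ Icc (0:ℝ) 1, u ≤ u₀ → h1 u = h2 v →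
        u = u₀ ∧ v = v₀ := by
      intro u hu v hv hle heq
      have huS : u ∈ S := ⟨hu, ⟨v, hv, heq.symm⟩⟩
      have huu : u = u₀ := le_antisymm hle (hmin u huS)
      refine ⟨huu, geod_injOn hh2 hzy hv hv₀I ?_⟩
      rw [← heq, huu, ← hv₀]
    by_cases hu0 : u₀ = 0
    · -- x lies on h2, arc is tail of h2
      have hxv : h2 v₀ = g 0 := by rw [hv₀, hu0, ← ex]
      have hv1 : v₀ ≠ 1 := by
        intro h
        rw [h] at hxv
        exact hxy (hxv.symm.trans ey.symm)
      have hv0lt : v₀ < 1 := lt_of_le_of_ne hv₀I.2 hv1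
      set f : ℝ → T := fun t => h2 (v₀ + t * (1 - v₀)) with hfdef
      have hmaps : ∀ t ∈ Icc (0:ℝ) 1, v₀ + t * (1 - v₀) ∈ Icc (0:ℝ) 1 := by
        intro t ht
        constructor
        · nlinarith [hv₀I.1, ht.1]
        · nlinarith [ht.2]
      have hfarc : IsArcIn (f '' Icc 0 1) (g 0) (g 1) := by
        refine ⟨f, ?_, ?_, ?_, ?_, rfl⟩
        · apply (geod_continuousOn hh2).comp
          · fun_prop
          · intro t ht; exact hmaps t ht
        · intro t ht t' ht' heq
          have := geod_injOn hh2 hzy (hmaps t ht) (hmaps t' ht') heq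
          nlinarith [this]
        · show h2 (v₀ + 0 * (1 - v₀)) = g 0
          rw [show v₀ + 0 * (1 - v₀) = v₀ by ring]; exact hxv
        · show h2 (v₀ + 1 * (1 - v₀)) = g 1
          rw [show v₀ + 1 * (1 - v₀) = 1 by ring]; exact ey.symm
      have := hT.unique_arc (g 0) (g 1) hxy _ _ (geod_isArc hg hxy) hfarc
      rw [this]
      rintro q ⟨t, ht, rfl⟩
      right
      exact ⟨v₀ + t * (1 - v₀), hmaps t ht, rfl⟩
    by_cases hv1 : v₀ = 1
    · -- m = y, arc is initial piece of h1
      have hyu : h1 u₀ = g 1 := by rw [← hv₀, hv1, ← ey]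
      have hu0lt : 0 < u₀ := lt_of_le_of_ne hu₀I.1 (Ne.symm hu0)
      set f : ℝ → T := fun t => h1 (t * u₀) with hfdef
      have hmaps : ∀ t ∈ Icc (0:ℝ) 1, t * u₀ ∈ Icc (0:ℝ) 1 := by
        intro t ht
        constructor
        · nlinarith [ht.1, hu₀I.1]
        · nlinarith [ht.2, hu₀I.2, hu₀I.1]
      have hfarc : IsArcIn (f '' Icc 0 1) (g 0) (g 1) := by
        refine ⟨f, ?_, ?_, ?_, ?_, rfl⟩
        · apply (geod_continuousOn hh1).comp
          · fun_prop
          · intro t ht; exact hmaps t ht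
        · intro t ht t' ht' heq
          have := geod_injOn hh1 hxz (hmaps t ht) (hmaps t' ht') heq
          have h' : t * u₀ = t' * u₀ := this
          exact mul_right_cancel₀ (ne_of_gt hu0lt) h'
        · show h1 (0 * u₀) = g 0
          rw [zero_mul]; exact ex.symm
        · show h1 (1 * u₀) = g 1
          rw [one_mul]; exact hyu
      have := hT.unique_arc (g 0) (g 1) hxy _ _ (geod_isArc hg hxy) hfarc
      rw [this]
      rintro q ⟨t, ht, rfl⟩
      left
      exact ⟨t * u₀, hmaps t ht, rfl⟩
    · -- generic case: concatenation
      have hu0lt : 0 < u₀ := lt_of_le_of_ne hu₀I.1 (Ne.symm hu0)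
      have hv0lt : v₀ < 1 := lt_of_le_of_ne hv₀I.2 hv1
      set c₁ : ℝ → ℝ := fun t => 2 * max 0 (min t (1/2)) * u₀ with hc₁def
      set c₂ : ℝ → ℝ := fun t => v₀ + (2 * min (max t (1/2)) 1 - 1) * (1 - v₀) with hc₂def
      have hc₁maps : ∀ t, c₁ t ∈ Icc (0:ℝ) 1 := by
        intro t
        have h1' : max 0 (min t (1/2)) ≤ 1/2 := max_le (by norm_num) (min_le_right _ _)
        have h2' : (0:ℝ) ≤ max 0 (min t (1/2)) := le_max_left _ _
        constructor
        · positivity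
        · calc 2 * max 0 (min t (1/2)) * u₀ ≤ 2 * (1/2) * u₀ := by nlinarith [hu₀I.1]
            _ ≤ 1 := by linarith [hu₀I.2]
      have hc₂maps : ∀ t, c₂ t ∈ Icc (0:ℝ) 1 := by
        intro t
        have h1' : (1/2:ℝ) ≤ min (max t (1/2)) 1 := le_min (le_max_right _ _) (by norm_num)
        have h2' : min (max t (1/2)) 1 ≤ 1 := min_le_right _ _
        simp only [hc₂def]
        constructor
        · nlinarith [hv₀I.1, hv₀I.2]
        · nlinarith [hv₀I.1, hv₀I.2]
      have hc₁eq : ∀ t ∈ Icc (0:ℝ) 1, t ≤ 1/2 → c₁ t = 2 * t * u₀ := by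
        intro t ht hle
        simp only [hc₁def]
        rw [min_eq_left hle, max_eq_right ht.1]
      have hc₂eq : ∀ t ∈ Icc (0:ℝ) 1, 1/2 ≤ t → c₂ t = v₀ + (2 * t - 1) * (1 - v₀) := by
        intro t ht hle
        simp only [hc₂def]
        rw [max_eq_left hle, min_eq_left ht.2]
      set f : ℝ → T := fun t => if t ≤ (1/2:ℝ) then h1 (c₁ t) else h2 (c₂ t) with hfdef
      have hfcont : Continuous f := by
        apply Continuous.if_le
        · exact (geod_continuousOn hh1).comp_continuous (by fun_prop) hc₁maps
        · exact (geod_continuousOn hh2).comp_continuous (by fun_prop) hc₂maps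
        · exact continuous_id
        · exact continuous_const
        · intro t hthalf
          subst hthalf
          have e1 : c₁ (1/2 : ℝ) = u₀ := by
            simp only [hc₁def]; norm_num
          have e2 : c₂ (1/2 : ℝ) = v₀ := by
            simp only [hc₂def]; norm_num
          rw [e1, e2, ← hv₀]
      have hfinj : InjOn f (Icc 0 1) := by
        intro t ht t' ht' heq
        simp only [hfdef] at heq
        by_cases hc : t ≤ 1/2 <;> by_cases hc' : t' ≤ 1/2
        · rw [if_pos hc, if_pos hc', hc₁eq t ht hc, hc₁eq t' ht' hc'] at heq
          have hm : (2 * t * u₀) ∈ Icc (0:ℝ) 1 := by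
            constructor
            · nlinarith [ht.1, hu₀I.1]
            · nlinarith [hu₀I.1, hu₀I.2, ht.1]
          have hm' : (2 * t' * u₀) ∈ Icc (0:ℝ) 1 := by
            constructor
            · nlinarith [ht'.1, hu₀I.1]
            · nlinarith [hu₀I.1, hu₀I.2, ht'.1]
          have := geod_injOn hh1 hxz hm hm' heq
          have h' : 2 * t * u₀ = 2 * t' * u₀ := this
          nlinarith [h']
        · -- t ≤ 1/2 < t'
          exfalso
          push_neg at hc'
          rw [if_pos hc, if_neg (not_le.2 hc'), hc₁eq t ht hc,
            hc₂eq t' ht' hc'.le] at heq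
          have hm : (2 * t * u₀) ∈ Icc (0:ℝ) 1 := by
            constructor
            · nlinarith [ht.1, hu₀I.1]
            · nlinarith [hu₀I.1, hu₀I.2, ht.1]
          have hle : 2 * t * u₀ ≤ u₀ := by nlinarith [hu₀I.1]
          have hm' : (v₀ + (2 * t' - 1) * (1 - v₀)) ∈ Icc (0:ℝ) 1 := by
            constructor
            · nlinarith [hv₀I.1, ht'.2]
            · nlinarith [ht'.2]
          obtain ⟨_, hveq⟩ := hcross _ hm _ hm' hle heq
          nlinarith [hveq]
        · -- t' ≤ 1/2 < t
          exfalso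
          push_neg at hc
          rw [if_neg (not_le.2 hc), if_pos hc', hc₂eq t ht hc.le,
            hc₁eq t' ht' hc'] at heq
          have hm' : (2 * t' * u₀) ∈ Icc (0:ℝ) 1 := by
            constructor
            · nlinarith [ht'.1, hu₀I.1]
            · nlinarith [hu₀I.1, hu₀I.2, ht'.1]
          have hle : 2 * t' * u₀ ≤ u₀ := by nlinarith [hu₀I.1]
          have hm : (v₀ + (2 * t - 1) * (1 - v₀)) ∈ Icc (0:ℝ) 1 := by
            constructor
            · nlinarith [hv₀I.1, ht.2]
            · nlinarith [ht.2]
          obtain ⟨_, hveq⟩ := hcross _ hm' _ hm hle heq.symm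
          nlinarith [hveq]
        · push_neg at hc hc'
          rw [if_neg (not_le.2 hc), if_neg (not_le.2 hc'), hc₂eq t ht hc.le,
            hc₂eq t' ht' hc'.le] at heq
          have hm : (v₀ + (2 * t - 1) * (1 - v₀)) ∈ Icc (0:ℝ) 1 := by
            constructor
            · nlinarith [hv₀I.1, ht.2]
            · nlinarith [ht.2]
          have hm' : (v₀ + (2 * t' - 1) * (1 - v₀)) ∈ Icc (0:ℝ) 1 := by
            constructor
            · nlinarith [hv₀I.1, ht'.2]
            · nlinarith [ht'.2]
          have := geod_injOn hh2 hzy hm hm' heq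
          have h' : v₀ + (2 * t - 1) * (1 - v₀) = v₀ + (2 * t' - 1) * (1 - v₀) := this
          nlinarith [h']
      have hfarc : IsArcIn (f '' Icc 0 1) (g 0) (g 1) := by
        refine ⟨f, hfcont.continuousOn, hfinj, ?_, ?_, rfl⟩
        · show (if (0:ℝ) ≤ 1/2 then h1 (c₁ 0) else h2 (c₂ 0)) = g 0
          rw [if_pos (by norm_num)]
          have : c₁ 0 = 0 := by simp only [hc₁def]; norm_num
          rw [this]; exact ex.symm
        · show (if (1:ℝ) ≤ 1/2 then h1 (c₁ 1) else h2 (c₂ 1)) = g 1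
          rw [if_neg (by norm_num)]
          have : c₂ 1 = 1 := by simp only [hc₂def]; norm_num
          rw [this]; exact ey.symm
      have := hT.unique_arc (g 0) (g 1) hxy _ _ (geod_isArc hg hxy) hfarc
      rw [this]
      rintro q ⟨t, ht, rfl⟩
      simp only [hfdef]
      by_cases hc : t ≤ 1/2
      · rw [if_pos hc]
        left
        exact ⟨c₁ t, hc₁maps t, rfl⟩
      · rw [if_neg hc]
        right
        exact ⟨c₂ t, hc₂maps t, rfl⟩

set_option maxHeartbeats 1000000 in
lemma key (hT : IsMetricTree T) {g g' : ℝ → T}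
    (hg : IsGeodesicPath g) (hg' : IsGeodesicPath g') {s : ℝ} (hs : s ∈ Icc (0:ℝ) 1) :
    dist (g s) (g' s) ≤ max (dist (g 0) (g' 0)) (dist (g 1) (g' 1)) := by
  obtain ⟨gA, hgA0, hgA1, hgA⟩ := hT.exists_geodesic (g 0) (g' 0)
  obtain ⟨gB, hgB0, hgB1, hgB⟩ := hT.exists_geodesic (g 1) (g' 1)
  obtain ⟨k, hk0, hk1, hk⟩ := hT.exists_geodesic (g' 0) (g 1)
  obtain ⟨k2, hk20, hk21, hk2⟩ := hT.exists_geodesic (g 0) (g' 1)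
  set A := dist (g 0) (g' 0) with hA
  set B := dist (g 1) (g' 1) with hB
  set D := dist (g 0) (g 1) with hD
  set D' := dist (g' 0) (g' 1) with hD'
  -- decomposition of g s
  have hx : g s ∈ gA '' Icc 0 1 ∪ (g' '' Icc 0 1 ∪ gB '' Icc 0 1) := by
    have d1 : g '' Icc 0 1 ⊆ gA '' Icc 0 1 ∪ k '' Icc 0 1 :=
      tripod hT hg hgA hk hgA0.symm (by rw [hgA1, hk0]) hk1.symm
    have d2 : k '' Icc 0 1 ⊆ g' '' Icc 0 1 ∪ (fun t => gB (1 - t)) '' Icc 0 1 := by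
      refine tripod hT hk hg' (geod_reverse hgB) hk0 ?_ ?_
      · show g' 1 = gB (1 - 0)
        rw [show (1:ℝ) - 0 = 1 by norm_num, hgB1]
      · show k 1 = gB (1 - 1)
        rw [show (1:ℝ) - 1 = 0 by norm_num, hgB0, hk1]
    rcases d1 ⟨s, hs, rfl⟩ with h | h
    · exact Or.inl h
    · rcases d2 h with h' | h'
      · exact Or.inr (Or.inl h')
      · right; right; rwa [reverse_image] at h'
  -- decomposition of g' s
  have hx' : g' s ∈ gA '' Icc 0 1 ∪ (g '' Icc 0 1 ∪ gB '' Icc 0 1) := by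
    have d3 : g' '' Icc 0 1 ⊆ (fun t => gA (1 - t)) '' Icc 0 1 ∪ k2 '' Icc 0 1 := by
      refine tripod hT hg' (geod_reverse hgA) hk2 ?_ ?_ hk21.symm
      · show g' 0 = gA (1 - 0)
        rw [show (1:ℝ) - 0 = 1 by norm_num, hgA1]
      · show gA (1 - 1) = k2 0
        rw [show (1:ℝ) - 1 = 0 by norm_num, hgA0, hk20]
    have d4 : k2 '' Icc 0 1 ⊆ g '' Icc 0 1 ∪ gB '' Icc 0 1 :=
      tripod hT hk2 hg hgB hk20 hgB0.symm (by rw [hk21, hgB1])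
    rcases d3 ⟨s, hs, rfl⟩ with h | h
    · left; rwa [reverse_image] at h
    · rcases d4 h with h' | h'
      · exact Or.inr (Or.inl h')
      · exact Or.inr (Or.inr h')
  have dxs0 : dist (g 0) (g s) = D * s := geod_dist_left hg hs
  have dxs1 : dist (g s) (g 1) = D * (1 - s) := geod_dist_right hg hs
  have dys0 : dist (g' 0) (g' s) = D' * s := geod_dist_left hg' hs
  have dys1 : dist (g' s) (g' 1) = D' * (1 - s) := geod_dist_right hg' hs
  have hs0 := hs.1
  have hs1 := hs.2
  -- Case X1 : g s lies on g'
  have X1 : g s ∈ g' '' Icc 0 1 → dist (g s) (g' s) ≤ max A B := by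
    rintro ⟨σ, hσ, hσeq⟩
    have e1 : dist (g s) (g' s) = D' * |σ - s| := by rw [← hσeq, hg' σ hσ s hs]
    have c1 : dist (g' 0) (g s) = D' * σ := by rw [← hσeq]; exact geod_dist_left hg' hσ
    have c2 : dist (g s) (g' 1) = D' * (1 - σ) := by rw [← hσeq]; exact geod_dist_right hg' hσ
    have t1 : |dist (g 0) (g s) - dist (g' 0) (g s)| ≤ A := abs_dist_sub_le _ _ _
    rw [dxs0, c1, abs_le] at t1
    have t2 : |dist (g s) (g 1) - dist (g s) (g' 1)| ≤ B := by
      have h := abs_dist_sub_le (g 1) (g' 1) (g s)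
      rwa [dist_comm (g 1) (g s), dist_comm (g' 1) (g s)] at h
    rw [dxs1, c2, abs_le] at t2
    rw [e1]
    have hσ0 := hσ.1
    have hσ1 := hσ.2
    rcases le_total σ s with hσs | hσs
    · rw [abs_of_nonpos (by linarith), neg_sub]
      rcases le_total D D' with hDD | hDD
      · apply le_max_of_le_right
        nlinarith [t2.1, mul_nonneg (by linarith : (0:ℝ) ≤ 1 - s) (by linarith : (0:ℝ) ≤ D' - D)]
      · apply le_max_of_le_left
        nlinarith [t1.2, mul_nonneg hs0 (by linarith : (0:ℝ) ≤ D - D')]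
    · rw [abs_of_nonneg (by linarith)]
      rcases le_total D D' with hDD | hDD
      · apply le_max_of_le_left
        nlinarith [t1.1, mul_nonneg hs0 (by linarith : (0:ℝ) ≤ D' - D)]
      · apply le_max_of_le_right
        nlinarith [t2.2, mul_nonneg (by linarith : (0:ℝ) ≤ 1 - s) (by linarith : (0:ℝ) ≤ D - D')]
  -- Case X2 : g' s lies on g
  have X2 : g' s ∈ g '' Icc 0 1 → dist (g s) (g' s) ≤ max A B := by
    rintro ⟨τ, hτ, hτeq⟩
    have e1 : dist (g s) (g' s) = D * |s - τ| := by rw [← hτeq, hg s hs τ hτ]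
    have c1 : dist (g 0) (g' s) = D * τ := by rw [← hτeq]; exact geod_dist_left hg hτ
    have c2 : dist (g' s) (g 1) = D * (1 - τ) := by rw [← hτeq]; exact geod_dist_right hg hτ
    have t1 : |dist (g 0) (g' s) - dist (g' 0) (g' s)| ≤ A := abs_dist_sub_le _ _ _
    rw [c1, dys0, abs_le] at t1
    have t2 : |dist (g' s) (g 1) - dist (g' s) (g' 1)| ≤ B := by
      have h := abs_dist_sub_le (g 1) (g' 1) (g' s)
      rwa [dist_comm (g 1) (g' s), dist_comm (g' 1) (g' s)] at h
    rw [c2, dys1, abs_le] at t2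
    rw [e1]
    have hτ0 := hτ.1
    have hτ1 := hτ.2
    rcases le_total τ s with hτs | hτs
    · rw [abs_of_nonneg (by linarith)]
      rcases le_total D D' with hDD | hDD
      · apply le_max_of_le_left
        nlinarith [t1.1, mul_nonneg hs0 (by linarith : (0:ℝ) ≤ D' - D)]
      · apply le_max_of_le_right
        nlinarith [t2.2, mul_nonneg (by linarith : (0:ℝ) ≤ 1 - s) (by linarith : (0:ℝ) ≤ D - D')]
    · rw [abs_of_nonpos (by linarith), neg_sub]
      rcases le_total D D' with hDD | hDD
      · apply le_max_of_le_right
        nlinarith [t2.1, mul_nonneg (by linarith : (0:ℝ) ≤ 1 - s) (by linarith : (0:ℝ) ≤ D' - D)]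
      · apply le_max_of_le_left
        nlinarith [t1.2, mul_nonneg hs0 (by linarith : (0:ℝ) ≤ D - D')]
  rcases hx with hxa | hxg' | hxb
  · rcases hx' with hx'a | hx'g | hx'b
    · -- X3 : both on gA
      apply le_max_of_le_left
      have sum1 : dist (g 0) (g s) + dist (g s) (g' 0) = A := by
        have h := dist_sum_of_mem hgA hxa
        rwa [hgA0, hgA1, ← hA] at h
      have sum2 : dist (g 0) (g' s) + dist (g' s) (g' 0) = A := by
        have h := dist_sum_of_mem hgA hx'a
        rwa [hgA0, hgA1, ← hA] at h
      have b1 := dist_triangle (g s) (g 0) (g' s)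
      have b2 := dist_triangle (g s) (g' 0) (g' s)
      rw [dist_comm (g s) (g 0)] at b1
      rw [dist_comm (g' 0) (g' s)] at b2
      linarith
    · exact X2 hx'g
    · -- X5 : g s on gA, g' s on gB
      have sum1 : dist (g 0) (g s) + dist (g s) (g' 0) = A := by
        have h := dist_sum_of_mem hgA hxa
        rwa [hgA0, hgA1, ← hA] at h
      have sum2 : dist (g 1) (g' s) + dist (g' s) (g' 1) = B := by
        have h := dist_sum_of_mem hgB hx'b
        rwa [hgB0, hgB1, ← hB] at h
      have b1 := dist_triangle (g s) (g' 0) (g' s)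
      have b2 := dist_triangle (g s) (g 1) (g' s)
      rcases le_total D D' with hDD | hDD
      · apply le_max_of_le_right
        nlinarith [mul_nonneg (by linarith : (0:ℝ) ≤ 1 - s) (by linarith : (0:ℝ) ≤ D' - D)]
      · apply le_max_of_le_left
        nlinarith [mul_nonneg hs0 (by linarith : (0:ℝ) ≤ D - D')]
  · exact X1 hxg'
  · rcases hx' with hx'a | hx'g | hx'b
    · -- X6 : g s on gB, g' s on gA
      have sum1 : dist (g 1) (g s) + dist (g s) (g' 1) = B := by
        have h := dist_sum_of_mem hgB hxb
        rwa [hgB0, hgB1, ← hB] at h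
      have sum2 : dist (g 0) (g' s) + dist (g' s) (g' 0) = A := by
        have h := dist_sum_of_mem hgA hx'a
        rwa [hgA0, hgA1, ← hA] at h
      have b1 := dist_triangle (g s) (g 0) (g' s)
      have b2 := dist_triangle (g s) (g' 1) (g' s)
      rw [dist_comm (g s) (g 0)] at b1
      rw [dist_comm (g s) (g 1)] at dxs1
      rcases le_total D D' with hDD | hDD
      · apply le_max_of_le_left
        nlinarith [mul_nonneg hs0 (by linarith : (0:ℝ) ≤ D' - D),
          dist_comm (g' s) (g' 0), dist_comm (g' 1) (g' s)]
      · apply le_max_of_le_right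
        nlinarith [mul_nonneg (by linarith : (0:ℝ) ≤ 1 - s) (by linarith : (0:ℝ) ≤ D - D'),
          dist_comm (g' s) (g' 0), dist_comm (g' 1) (g' s)]
    · exact X2 hx'g
    · -- X4 : both on gB
      apply le_max_of_le_right
      have sum1 : dist (g 1) (g s) + dist (g s) (g' 1) = B := by
        have h := dist_sum_of_mem hgB hxb
        rwa [hgB0, hgB1, ← hB] at h
      have sum2 : dist (g 1) (g' s) + dist (g' s) (g' 1) = B := by
        have h := dist_sum_of_mem hgB hx'b
        rwa [hgB0, hgB1, ← hB] at h
      have b1 := dist_triangle (g s) (g 1) (g' s)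
      have b2 := dist_triangle (g s) (g' 1) (g' s)
      rw [dist_comm (g s) (g 1)] at b1
      rw [dist_comm (g' 1) (g' s)] at b2
      linarith

end Stmt10Aux

/-- Let `T` be a metric tree with `diam T ≤ L`, `p` an `L`-Lipschitz path, `η` the
geodesic from `p 0` to `p 1`, and for each `t` let `G t` be the geodesic from `p t` to
`η t`. Then `(t,s) ↦ G t s` is `L`-Lipschitz from the square with the `L¹` metric. -/
theorem stmt10 {T : Type*} [MetricSpace T] (hT : IsMetricTree T) (L : ℝ) (hL : 0 ≤ L)
    (hdiam : Metric.diam (univ : Set T) ≤ L)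
    (p : ℝ → T)
    (hp : ∀ t ∈ Icc (0:ℝ) 1, ∀ t' ∈ Icc (0:ℝ) 1, dist (p t) (p t') ≤ L * |t - t'|)
    (η : ℝ → T) (hη : IsGeodesicPath η) (hη0 : η 0 = p 0) (hη1 : η 1 = p 1)
    (G : ℝ → ℝ → T)
    (hG : ∀ t ∈ Icc (0:ℝ) 1, IsGeodesicPath (G t) ∧ G t 0 = p t ∧ G t 1 = η t) :
    ∀ t ∈ Icc (0:ℝ) 1, ∀ s ∈ Icc (0:ℝ) 1, ∀ t' ∈ Icc (0:ℝ) 1, ∀ s' ∈ Icc (0:ℝ) 1,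
      dist (G t s) (G t' s') ≤ L * (|t - t'| + |s - s'|) := by
  intro t ht s hs t' ht' s' hs'
  obtain ⟨hGt, hGt0, hGt1⟩ := hG t ht
  obtain ⟨hGt', hGt'0, hGt'1⟩ := hG t' ht'
  have hpp' : dist (p 0) (p 1) ≤ L := by
    have h := hp 0 Stmt10Aux.mem01 1 Stmt10Aux.mem11
    rw [show |(0:ℝ) - 1| = 1 by norm_num, mul_one] at h
    exact h
  have hηd : dist (η 0) (η 1) ≤ L := by rw [hη0, hη1]; exact hpp'
  have keyts : dist (G t s) (G t' s) ≤ L * |t - t'| := by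
    have h := Stmt10Aux.key hT hGt hGt' hs
    have hA : dist (G t 0) (G t' 0) ≤ L * |t - t'| := by
      rw [hGt0, hGt'0]; exact hp t ht t' ht'
    have hB : dist (G t 1) (G t' 1) ≤ L * |t - t'| := by
      rw [hGt1, hGt'1, hη t ht t' ht']
      exact mul_le_mul_of_nonneg_right hηd (abs_nonneg _)
    exact h.trans (max_le hA hB)
  have hbound : dist (p t') (η t') ≤ L := by
    have e1 : dist (η 0) (η t') = dist (η 0) (η 1) * t' := Stmt10Aux.geod_dist_left hη ht'
    have e2 : dist (η t') (η 1) = dist (η 0) (η 1) * (1 - t') := Stmt10Aux.geod_dist_right hη ht'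
    have d1 : dist (p t') (p 0) ≤ L * t' := by
      have h := hp t' ht' 0 Stmt10Aux.mem01
      rwa [sub_zero, abs_of_nonneg ht'.1] at h
    have d2 : dist (p t') (p 1) ≤ L * (1 - t') := by
      have h := hp t' ht' 1 Stmt10Aux.mem11
      rwa [abs_sub_comm, abs_of_nonneg (by linarith [ht'.2] : (0:ℝ) ≤ 1 - t')] at h
    have hηnn : dist (η 0) (η 1) ≤ L := hηd
    have hη0t : dist (η 0) (η t') ≤ L * t' := by
      rw [e1]
      exact mul_le_mul_of_nonneg_right hηd ht'.1
    have hηt1 : dist (η t') (η 1) ≤ L * (1 - t') := by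
      rw [e2]
      exact mul_le_mul_of_nonneg_right hηd (by linarith [ht'.2])
    rcases le_total t' (1/2) with hhalf | hhalf
    · have tri : dist (p t') (η t') ≤ dist (p t') (p 0) + dist (p 0) (η t') :=
        dist_triangle _ _ _
      rw [hη0] at hη0t
      nlinarith
    · have tri : dist (p t') (η t') ≤ dist (p t') (p 1) + dist (p 1) (η t') :=
        dist_triangle _ _ _
      rw [hη1, dist_comm] at hηt1
      nlinarith
  have keyss : dist (G t' s) (G t' s') ≤ L * |s - s'| := by
    rw [hGt' s hs s' hs', hGt'0, hGt'1]
    exact mul_le_mul_of_nonneg_right hbound (abs_nonneg _)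
  calc dist (G t s) (G t' s') ≤ dist (G t s) (G t' s) + dist (G t' s) (G t' s') :=
        dist_triangle _ _ _
    _ ≤ L * |t - t'| + L * |s - s'| := add_le_add keyts keyss
    _ = L * (|t - t'| + |s - s'|) := by ring
end

section
/- Suppose that for a Lipschitz path γ in a metric space M, and for every Lipschitz path β homotopic rel endpoints to γ, there exists a Lipschitz path β' homotopic rel endpoints to γ with Lip(β') ≤ Lip(γ), image(β') ⊆ image(γ), and length(β') ≤ length(β), via a homotopy H' with Lip(H') = Lip(γ) and image(H') ⊆ image(γ). Then the homotopy class [γ] contains a length minimizing representative γ̄, i.e. length(γ̄) = inf { length(β) : β ∈ [γ] }. -/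
open Set

/-- Length of a path on `[0,1]`. -/
noncomputable def pathLen {M : Type*} [PseudoEMetricSpace M] (η : ℝ → M) : ENNReal :=
  eVariationOn η (Set.Icc 0 1)

/-- The unit square. -/
def Sq : Set (ℝ × ℝ) := Icc 0 1 ×ˢ Icc 0 1

/-- `H` is `L`-Lipschitz on the unit square with respect to the `L¹` metric. -/
def LipOnSq {M : Type*} [PseudoMetricSpace M] (L : ℝ) (H : ℝ × ℝ → M) : Prop :=
  ∀ p ∈ Sq, ∀ q ∈ Sq, dist (H p) (H q) ≤ L * (|p.1 - q.1| + |p.2 - q.2|)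

/-- `γ` is `K`-Lipschitz on `[0,1]`. -/
def LipOn {M : Type*} [PseudoMetricSpace M] (K : ℝ) (γ : ℝ → M) : Prop :=
  ∀ t ∈ Icc (0:ℝ) 1, ∀ t' ∈ Icc (0:ℝ) 1, dist (γ t) (γ t') ≤ K * |t - t'|

/-- The (optimal) Lipschitz constant of a path on `[0,1]`. -/
noncomputable def lipC {M : Type*} [PseudoMetricSpace M] (γ : ℝ → M) : ℝ :=
  sInf {K : ℝ | 0 ≤ K ∧ LipOn K γ}

/-- The (optimal) Lipschitz constant of a map on the unit square with the `L¹` metric. -/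
noncomputable def lipCSq {M : Type*} [PseudoMetricSpace M] (H : ℝ × ℝ → M) : ℝ :=
  sInf {L : ℝ | 0 ≤ L ∧ LipOnSq L H}

/-- `β` is Lipschitz homotopic rel endpoints to `γ`. -/
def HtpyRel {M : Type*} [PseudoMetricSpace M] (γ β : ℝ → M) : Prop :=
  ∃ H : ℝ × ℝ → M, (∃ L : ℝ, 0 ≤ L ∧ LipOnSq L H) ∧
    (∀ t ∈ Icc (0:ℝ) 1, H (t, 0) = γ t) ∧
    (∀ t ∈ Icc (0:ℝ) 1, H (t, 1) = β t) ∧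
    (∀ s ∈ Icc (0:ℝ) 1, H (0, s) = γ 0) ∧
    (∀ s ∈ Icc (0:ℝ) 1, H (1, s) = γ 1)

/-!
Take a minimizing sequence `βₙ` in `[γ]` and replace it by the paths `β'ₙ` of the hypothesis.
Their homotopies `H'ₙ` are uniformly `Lip(γ)`-Lipschitz and take values in the compact set
`image(γ)`, so they converge pointwise along an ultrafilter (no Arzelà–Ascoli subsequence is needed,
since the uniform Lipschitz bound passes to pointwise limits); the limit is again a
`Lip(γ)`-Lipschitz homotopy rel endpoints, from `γ` to the pointwise limit `γ̄` of the `β'ₙ`.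
Length is lower semicontinuous under pointwise convergence, hence
`length(γ̄) ≤ lim length(βₙ) = inf [γ]`.
-/

open Filter Topology

def IsRelHomotopy {M : Type*} (H : ℝ × ℝ → M) (γ β : ℝ → M) : Prop :=
  (∀ t ∈ Icc (0:ℝ) 1, H (t, 0) = γ t) ∧
    (∀ t ∈ Icc (0:ℝ) 1, H (t, 1) = β t) ∧
    (∀ s ∈ Icc (0:ℝ) 1, H (0, s) = γ 0) ∧
    (∀ s ∈ Icc (0:ℝ) 1, H (1, s) = γ 1)

theorem exists_seq_mem_tendsto_iInf₂ {α β : Type*} [CompleteLinearOrder β] [TopologicalSpace β]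
    [OrderTopology β] [FirstCountableTopology β] {s : Set α} (hs : s.Nonempty) (f : α → β) :
    ∃ x : ℕ → α, (∀ n, x n ∈ s) ∧ Tendsto (f ∘ x) atTop (𝓝 (⨅ a ∈ s, f a)) := by
  obtain ⟨u, -, hu, hus⟩ := exists_seq_tendsto_sInf (hs.image f) (OrderBot.bddBelow _)
  choose x hxs hx using hus
  refine ⟨x, hxs, ?_⟩
  rw [← sInf_image]
  exact hu.congr fun n => (hx n).symm

theorem IsCompact.exists_tendsto_of_mapsTo {ι α X : Type*} [TopologicalSpace X] {K : Set X}
    (hK : IsCompact K) {s : Set α} {F : ι → α → X} (hF : ∀ i, MapsTo (F i) s K)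
    (U : Ultrafilter ι) : ∃ f : α → X, ∀ x ∈ s, Tendsto (fun i => F i x) U (𝓝 (f x)) := by
  have : Nonempty ι := nonempty_of_neBot (U : Filter ι)
  have hlim : ∀ x, ∃ y, x ∈ s → Tendsto (fun i => F i x) U (𝓝 y) := by
    intro x
    by_cases hx : x ∈ s
    · obtain ⟨y, -, hy⟩ := hK.ultrafilter_le_nhds (U.map fun i => F i x)
        (le_principal_iff.mpr (mem_map.mpr (Eventually.of_forall fun i => hF i hx)))
      exact ⟨y, fun _ => hy⟩
    · exact ⟨F (Classical.arbitrary ι) x, fun h => absurd h hx⟩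
  choose f hf using hlim
  exact ⟨f, fun x hx => hf x hx⟩

theorem eVariationOn_le_of_tendsto {ι α E : Type*} [LinearOrder α] [PseudoEMetricSpace E]
    {p : Filter ι} [p.NeBot] {F : ι → α → E} {f : α → E} {s : Set α}
    (hFf : ∀ x ∈ s, Tendsto (fun i => F i x) p (𝓝 (f x))) {g : ι → ENNReal} {c : ENNReal}
    (hFg : ∀ i, eVariationOn (F i) s ≤ g i) (hg : Tendsto g p (𝓝 c)) :
    eVariationOn f s ≤ c := by
  by_contra! hc
  obtain ⟨v, hcv, hv⟩ := exists_between hc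
  have hF := eVariationOn.lowerSemicontinuous_aux hFf hv
  obtain ⟨i, hFi, hgi⟩ := (hF.and (hg.eventually_lt_const hcv)).exists
  exact (hFi.trans_le (hFg i)).not_gt hgi

section

variable {M : Type*} [PseudoMetricSpace M]

theorem LipOn.lipschitzOnWith {K : ℝ} {γ : ℝ → M} (hγ : LipOn K γ) :
    LipschitzOnWith K.toNNReal γ (Icc 0 1) :=
  LipschitzOnWith.of_dist_le_mul fun t ht t' ht' => by
    rw [Real.dist_eq, Real.coe_toNNReal']
    exact (hγ t ht t' ht').trans (mul_le_mul_of_nonneg_right (le_max_left _ _) (abs_nonneg _))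

theorem LipOn.isCompact_image {K : ℝ} {γ : ℝ → M} (hγ : LipOn K γ) :
    IsCompact (γ '' Icc 0 1) :=
  isCompact_Icc.image_of_continuousOn hγ.lipschitzOnWith.continuousOn

theorem LipOn.lipOnSq_comp_fst {K : ℝ} {γ : ℝ → M} (hK : 0 ≤ K) (hγ : LipOn K γ) :
    LipOnSq K (fun p => γ p.1) := fun p hp q hq =>
  (hγ p.1 hp.1 q.1 hq.1).trans <|
    mul_le_mul_of_nonneg_left (le_add_of_nonneg_right (abs_nonneg _)) hK

theorem HtpyRel.refl {K : ℝ} {γ : ℝ → M} (hK : 0 ≤ K) (hγ : LipOn K γ) : HtpyRel γ γ :=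
  ⟨fun p => γ p.1, ⟨K, hK, hγ.lipOnSq_comp_fst hK⟩, fun _ _ => rfl, fun _ _ => rfl,
    fun _ _ => rfl, fun _ _ => rfl⟩

theorem lipC_nonneg (γ : ℝ → M) : 0 ≤ lipC γ :=
  Real.sInf_nonneg fun _ hK => hK.1

variable {ι : Type*} {p : Filter ι} [p.NeBot] {H : ι → ℝ × ℝ → M} {Hf : ℝ × ℝ → M}

theorem LipOnSq.of_tendsto {L : ℝ} (hH : ∀ i, LipOnSq L (H i))
    (hlim : ∀ x ∈ Sq, Tendsto (fun i => H i x) p (𝓝 (Hf x))) : LipOnSq L Hf :=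
  fun x hx y hy => le_of_tendsto ((hlim x hx).dist (hlim y hy)) <|
    Eventually.of_forall fun i => hH i x hx y hy

theorem IsRelHomotopy.of_tendsto [T2Space M] {γ : ℝ → M} {β : ι → ℝ → M}
    (hH : ∀ i, IsRelHomotopy (H i) γ (β i))
    (hlim : ∀ x ∈ Sq, Tendsto (fun i => H i x) p (𝓝 (Hf x))) :
    IsRelHomotopy Hf γ (fun t => Hf (t, 1)) := by
  have hconst : ∀ x ∈ Sq, ∀ y, (∀ i, H i x = y) → Hf x = y := fun x hx y hy =>
    tendsto_nhds_unique (hlim x hx) (tendsto_const_nhds.congr fun i => (hy i).symm)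
  refine ⟨fun t ht => ?_, fun _ _ => rfl, fun s hs => ?_, fun s hs => ?_⟩
  · exact hconst _ ⟨ht, left_mem_Icc.2 zero_le_one⟩ _ fun i => (hH i).1 t ht
  · exact hconst _ ⟨left_mem_Icc.2 zero_le_one, hs⟩ _ fun i => (hH i).2.2.1 s hs
  · exact hconst _ ⟨right_mem_Icc.2 zero_le_one, hs⟩ _ fun i => (hH i).2.2.2 s hs

end

/-- Suppose that for a Lipschitz path `γ` and every Lipschitz path `β` homotopic rel
endpoints to `γ` there are a path `β'` and a homotopy `H'` rel endpoints from `γ` to `β'`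
with `Lip(H') = Lip(γ)`, `image(H') ⊆ image(γ)`, `Lip(β') ≤ Lip(γ)`,
`image(β') ⊆ image(γ)`, and `length(β') ≤ length(β)`. Then `[γ]` contains a length
minimizing representative. -/
theorem stmt15 {M : Type*} [MetricSpace M] (γ : ℝ → M)
    (hγ : ∃ K : ℝ, 0 ≤ K ∧ LipOn K γ)
    (hdes : ∀ β : ℝ → M, HtpyRel γ β →
      ∃ (β' : ℝ → M) (H' : ℝ × ℝ → M),
        LipOnSq (lipC γ) H' ∧ lipCSq H' = lipC γ ∧
        (∀ t ∈ Icc (0:ℝ) 1, H' (t, 0) = γ t) ∧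
        (∀ t ∈ Icc (0:ℝ) 1, H' (t, 1) = β' t) ∧
        (∀ s ∈ Icc (0:ℝ) 1, H' (0, s) = γ 0) ∧
        (∀ s ∈ Icc (0:ℝ) 1, H' (1, s) = γ 1) ∧
        H' '' Sq ⊆ γ '' Icc 0 1 ∧
        LipOn (lipC γ) β' ∧ lipC β' ≤ lipC γ ∧
        β' '' Icc 0 1 ⊆ γ '' Icc 0 1 ∧
        pathLen β' ≤ pathLen β) :
    ∃ γbar : ℝ → M, HtpyRel γ γbar ∧
      pathLen γbar = ⨅ (β : ℝ → M) (_ : HtpyRel γ β), pathLen β := by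
  obtain ⟨K, hK0, hK⟩ := hγ
  have hself : HtpyRel γ γ := HtpyRel.refl hK0 hK
  obtain ⟨β, hβ, hβlen⟩ := exists_seq_mem_tendsto_iInf₂ (s := {β | HtpyRel γ β}) ⟨γ, hself⟩ pathLen
  choose β' H' hLip _ h0 h1 hL hR himg _ _ _ hshort using fun n => hdes (β n) (hβ n)
  let U : Ultrafilter ℕ := .of atTop
  obtain ⟨Hf, hHf⟩ := hK.isCompact_image.exists_tendsto_of_mapsTo
    (fun n => mapsTo_iff_image_subset.2 (himg n)) U
  have hrel : IsRelHomotopy Hf γ (fun t => Hf (t, 1)) :=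
    IsRelHomotopy.of_tendsto (fun n => ⟨h0 n, h1 n, hL n, hR n⟩) hHf
  have hhtpy : HtpyRel γ (fun t => Hf (t, 1)) :=
    ⟨Hf, ⟨lipC γ, lipC_nonneg γ, LipOnSq.of_tendsto hLip hHf⟩, hrel⟩
  refine ⟨_, hhtpy, le_antisymm ?_ (iInf₂_le _ hhtpy)⟩
  have hβ'lim : ∀ t ∈ Icc (0:ℝ) 1, Tendsto (fun n => β' n t) U (𝓝 (Hf (t, 1))) := fun t ht =>
    (hHf (t, 1) ⟨ht, right_mem_Icc.2 zero_le_one⟩).congr fun n => h1 n t ht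
  exact eVariationOn_le_of_tendsto hβ'lim hshort (hβlen.mono_left (Ultrafilter.of_le _))
end
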